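/- Let p ≥ 1, 1 ≤ k < p. Let U₁ ∈ ℝ^{p×k}, U₂ ∈ ℝ^{p×(p−k)} have orthonormal columns with U₁ᵀU₂ = 0, and let Û₁ ∈ ℝ^{p×k} have orthonormal columns; write Π₁ := U₁U₁ᵀ and Π̂₁ := Û₁Û₁ᵀ. Let φ_1, …, φ_n ∈ ℝ^p, ε_1, …, ε_n ∈ ℝ, β ∈ ℝ^p with β = Π₁β, and δ_1, …, δ_n ∈ ℝ^p with δ_t = U₂U₂ᵀδ_t for each t. Set r_t := φ_tᵀ(β + δ_t) + ε_t, Σ̂ := Σ_{t=1}^n φ_t φ_tᵀ, assume Σ̃ := Û₁ᵀ Σ̂ Û₁ is invertible, and define β̂ := Û₁ Σ̃^{-1} Σ_{t=1}^n Û₁ᵀ φ_t r_t. Then ‖ β̂ − Π̂₁ β ‖_{Σ̂} ≤ ‖ Û₁ᵀ Σ̂ (Π₁ − Π̂₁) β ‖_{Σ̃^{-1}} + ‖ Σ_{t=1}^n Û₁ᵀ φ_t φ_tᵀ δ_t ‖_{Σ̃^{-1}} + ‖ Σ_{t=1}^n Û₁ᵀ φ_t ε_t ‖_{Σ̃^{-1}}.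 -/

import Mathlib

open Matrix

/-- The weighted (semi-)norm `‖x‖_A := √(xᵀ A x)`. -/
noncomputable def wnorm {k : ℕ} (A : Matrix (Fin k) (Fin k) ℝ) (x : Fin k → ℝ) : ℝ :=
  Real.sqrt (x ⬝ᵥ A.mulVec x)

/-!
With `Σ̃ = Û₁ᵀ Σ̂ Û₁` we have `Π̂₁ β = Û₁ Σ̃⁻¹ (Σ̃ Û₁ᵀ β)`, and substituting `r_t` into `β̂` gives
`β̂ − Π̂₁ β = Û₁ Σ̃⁻¹ (a₁ + a₂ + a₃)` with `a₂ = ∑ Û₁ᵀ φ_t φ_tᵀ δ_t`, `a₃ = ∑ Û₁ᵀ φ_t ε_t` and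
`a₁ = Û₁ᵀ Σ̂ β − Σ̃ Û₁ᵀ β = Û₁ᵀ Σ̂ (Π₁ − Π̂₁) β`, the last step because `β = Π₁ β`.
Since `‖Û₁ Σ̃⁻¹ a‖²_{Σ̂} = aᵀ Σ̃⁻ᵀ Σ̃ Σ̃⁻¹ a = ‖a‖²_{Σ̃⁻¹}` and `Σ̃⁻¹` is positive semidefinite,
so that `‖·‖_{Σ̃⁻¹}` is a seminorm, the triangle inequality concludes.
-/

lemma wnorm_conjTranspose_mul_self {m k : ℕ} (B : Matrix (Fin m) (Fin k) ℝ) (x : Fin k → ℝ) :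
    wnorm (Bᴴ * B) x = ‖WithLp.toLp 2 (B *ᵥ x)‖ := by
  rw [wnorm, norm_eq_sqrt_real_inner, EuclideanSpace.inner_eq_star_dotProduct, ← mulVec_mulVec,
    dotProduct_mulVec, vecMul_conjTranspose]
  simp

open scoped MatrixOrder in
lemma wnorm_add_le {k : ℕ} {A : Matrix (Fin k) (Fin k) ℝ} (hA : A.PosSemidef)
    (x y : Fin k → ℝ) : wnorm A (x + y) ≤ wnorm A x + wnorm A y := by
  obtain ⟨B, rfl⟩ := CStarAlgebra.nonneg_iff_eq_star_mul_self.mp hA.nonneg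
  simp only [star_eq_conjTranspose, wnorm_conjTranspose_mul_self, mulVec_add, WithLp.toLp_add]
  exact norm_add_le _ _

lemma wnorm_transpose {k : ℕ} (A : Matrix (Fin k) (Fin k) ℝ) (x : Fin k → ℝ) :
    wnorm Aᵀ x = wnorm A x := by
  rw [wnorm, wnorm, mulVec_transpose, dotProduct_comm, ← dotProduct_mulVec]

lemma wnorm_mulVec {p k : ℕ} (M : Matrix (Fin p) (Fin p) ℝ) (U : Matrix (Fin p) (Fin k) ℝ)
    (y : Fin k → ℝ) : wnorm M (U *ᵥ y) = wnorm (Uᵀ * M * U) y := by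
  rw [wnorm, wnorm, ← mulVec_mulVec, ← mulVec_mulVec, dotProduct_mulVec y, vecMul_transpose]

lemma wnorm_inv_mulVec {k : ℕ} {S : Matrix (Fin k) (Fin k) ℝ} (hS : IsUnit S) (a : Fin k → ℝ) :
    wnorm S (S⁻¹ *ᵥ a) = wnorm S⁻¹ a := by
  rw [wnorm_mulVec, mul_nonsing_inv_cancel_right _ _ ((isUnit_iff_isUnit_det S).mp hS),
    wnorm_transpose]

lemma sum_vecMulVec_self_mulVec {ι n : Type*} [Fintype ι] [Fintype n] (φ : ι → n → ℝ)
    (x : n → ℝ) : (∑ t, vecMulVec (φ t) (φ t)) *ᵥ x = ∑ t, (φ t ⬝ᵥ x) • φ t := by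
  simp only [sum_mulVec, vecMulVec_mulVec, op_smul_eq_smul]

lemma mulVec_inv_mulVec_sub_mul_transpose_mulVec {m n : Type*} [Fintype m] [Fintype n]
    [DecidableEq n] (U : Matrix m n ℝ) {S : Matrix n n ℝ} (hS : IsUnit S) (b : n → ℝ)
    (β : m → ℝ) :
    U *ᵥ (S⁻¹ *ᵥ b) - (U * Uᵀ) *ᵥ β = U *ᵥ (S⁻¹ *ᵥ (b - S *ᵥ (Uᵀ *ᵥ β))) := by
  rw [mulVec_sub, mulVec_sub, mulVec_mulVec _ S⁻¹ S,
    nonsing_inv_mul _ ((isUnit_iff_isUnit_det S).mp hS), one_mulVec, ← mulVec_mulVec]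

theorem stmt18_general {p k n : ℕ}
    (U₁ Uhat₁ : Matrix (Fin p) (Fin k) ℝ)
    (φ : Fin n → Fin p → ℝ) (ε : Fin n → ℝ)
    (β : Fin p → ℝ) (hβ : β = (U₁ * U₁ᵀ).mulVec β)
    (δ : Fin n → Fin p → ℝ)
    (r : Fin n → ℝ) (hr : ∀ t, r t = φ t ⬝ᵥ (β + δ t) + ε t)
    (Shat : Matrix (Fin p) (Fin p) ℝ) (hShat : Shat = ∑ t, vecMulVec (φ t) (φ t))
    (Stil : Matrix (Fin k) (Fin k) ℝ) (hStil : Stil = Uhat₁ᵀ * Shat * Uhat₁)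
    (hinv : IsUnit Stil)
    (βhat : Fin p → ℝ)
    (hβhat : βhat = Uhat₁.mulVec (Stil⁻¹.mulVec (∑ t, r t • Uhat₁ᵀ.mulVec (φ t)))) :
    wnorm Shat (βhat - (Uhat₁ * Uhat₁ᵀ).mulVec β)
      ≤ wnorm Stil⁻¹
          ((Uhat₁ᵀ * Shat).mulVec ((U₁ * U₁ᵀ - Uhat₁ * Uhat₁ᵀ).mulVec β))
        + wnorm Stil⁻¹ (∑ t, (φ t ⬝ᵥ δ t) • Uhat₁ᵀ.mulVec (φ t))
        + wnorm Stil⁻¹ (∑ t, ε t • Uhat₁ᵀ.mulVec (φ t)) := by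
  have hbias : (Uhat₁ᵀ * Shat) *ᵥ ((U₁ * U₁ᵀ - Uhat₁ * Uhat₁ᵀ) *ᵥ β)
      = (Uhat₁ᵀ * Shat) *ᵥ β - Stil *ᵥ (Uhat₁ᵀ *ᵥ β) := by
    rw [sub_mulVec, mulVec_sub, ← hβ, hStil, mulVec_mulVec, mulVec_mulVec,
      Matrix.mul_assoc _ Uhat₁]
  set a₁ := (Uhat₁ᵀ * Shat) *ᵥ ((U₁ * U₁ᵀ - Uhat₁ * Uhat₁ᵀ) *ᵥ β)
  set a₂ := ∑ t, (φ t ⬝ᵥ δ t) • Uhat₁ᵀ *ᵥ φ t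
  set a₃ := ∑ t, ε t • Uhat₁ᵀ *ᵥ φ t
  have hShat_psd : Shat.PosSemidef := by
    simpa [hShat] using posSemidef_sum Finset.univ fun t _ => posSemidef_vecMulVec_self_star (φ t)
  have hStil_inv_psd : Stil⁻¹.PosSemidef := by
    simpa [hStil] using (hShat_psd.conjTranspose_mul_mul_same Uhat₁).inv
  have hresponse : ∑ t, r t • Uhat₁ᵀ *ᵥ φ t = (Uhat₁ᵀ * Shat) *ᵥ β + a₂ + a₃ := by
    simp only [a₂, a₃, hr, hShat, ← mulVec_mulVec, sum_vecMulVec_self_mulVec, mulVec_sum,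
      mulVec_smul, dotProduct_add, add_smul, Finset.sum_add_distrib]
  calc wnorm Shat (βhat - (Uhat₁ * Uhat₁ᵀ) *ᵥ β) = wnorm Stil⁻¹ (a₁ + a₂ + a₃) := by
        rw [hβhat, mulVec_inv_mulVec_sub_mul_transpose_mulVec _ hinv, wnorm_mulVec, ← hStil,
          wnorm_inv_mulVec hinv, hresponse, hbias]
        congr 1
        abel
    _ ≤ wnorm Stil⁻¹ a₁ + wnorm Stil⁻¹ a₂ + wnorm Stil⁻¹ a₃ :=
        (wnorm_add_le hStil_inv_psd _ _).trans
          (add_le_add_left (wnorm_add_le hStil_inv_psd _ _) _)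

/-- invariant-component error decomposition, estimated subspace.
With `Π₁ = U₁U₁ᵀ`, `Π̂₁ = Û₁Û₁ᵀ`, `β = Π₁ β`, `δ_t = U₂U₂ᵀ δ_t`,
`r_t = φ_tᵀ(β + δ_t) + ε_t`, `Σ̂ = ∑ φ_t φ_tᵀ`, `Σ̃ = Û₁ᵀ Σ̂ Û₁` invertible, and
`β̂ = Û₁ Σ̃⁻¹ ∑ Û₁ᵀ φ_t r_t`, one has the three-term decomposition
`‖β̂ − Π̂₁β‖_{Σ̂} ≤ ‖Û₁ᵀ Σ̂ (Π₁ − Π̂₁)β‖_{Σ̃⁻¹} + ‖∑ Û₁ᵀ φ_t φ_tᵀ δ_t‖_{Σ̃⁻¹}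
  + ‖∑ Û₁ᵀ φ_t ε_t‖_{Σ̃⁻¹}`. -/
theorem stmt18 {p k n : ℕ} (hp : 1 ≤ p) (hk1 : 1 ≤ k) (hkp : k < p)
    (U₁ Uhat₁ : Matrix (Fin p) (Fin k) ℝ) (U₂ : Matrix (Fin p) (Fin (p - k)) ℝ)
    (hU₁ : U₁ᵀ * U₁ = 1) (hU₂ : U₂ᵀ * U₂ = 1) (hU₁₂ : U₁ᵀ * U₂ = 0)
    (hUhat₁ : Uhat₁ᵀ * Uhat₁ = 1)
    (φ : Fin n → Fin p → ℝ) (ε : Fin n → ℝ)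
    (β : Fin p → ℝ) (hβ : β = (U₁ * U₁ᵀ).mulVec β)
    (δ : Fin n → Fin p → ℝ) (hδ : ∀ t, δ t = (U₂ * U₂ᵀ).mulVec (δ t))
    (r : Fin n → ℝ) (hr : ∀ t, r t = φ t ⬝ᵥ (β + δ t) + ε t)
    (Shat : Matrix (Fin p) (Fin p) ℝ) (hShat : Shat = ∑ t, vecMulVec (φ t) (φ t))
    (Stil : Matrix (Fin k) (Fin k) ℝ) (hStil : Stil = Uhat₁ᵀ * Shat * Uhat₁)
    (hinv : IsUnit Stil)
    (βhat : Fin p → ℝ)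
    (hβhat : βhat = Uhat₁.mulVec (Stil⁻¹.mulVec (∑ t, r t • Uhat₁ᵀ.mulVec (φ t)))) :
    wnorm Shat (βhat - (Uhat₁ * Uhat₁ᵀ).mulVec β)
      ≤ wnorm Stil⁻¹
          ((Uhat₁ᵀ * Shat).mulVec ((U₁ * U₁ᵀ - Uhat₁ * Uhat₁ᵀ).mulVec β))
        + wnorm Stil⁻¹ (∑ t, (φ t ⬝ᵥ δ t) • Uhat₁ᵀ.mulVec (φ t))
        + wnorm Stil⁻¹ (∑ t, ε t • Uhat₁ᵀ.mulVec (φ t)) :=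
  stmt18_general U₁ Uhat₁ φ ε β hβ δ r hr Shat hShat Stil hStil hinv βhat hβhat
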